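/- Let 1 ≤ i < r/2, and let S, S' ⊆ U have signatures x, x' with respect to P that are both i-balanced (i.e., x_i − g/8 ≤ x_j ≤ x_i + g/8 for all i < j ≤ r, and likewise for x'), satisfy x_j = x'_j for all j ≤ i, and have Σ_{j=1}^{r} x_j = Σ_{j=1}^{r} x'_j. Then (a) rk_{M_odd}(S) = rk_{M_odd}(S'), and (b) rk_{M_even}(S) = rk_{M_even}(S') = rk_{M'_even}(S) = rk_{M'_even}(S'). -/

import Mathlib

/-- Independence in the nested matroid defined by a partition `Q 1, …, Q m` and integer
thresholds `σ 1, …, σ m`: a set `I` is independent iff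
`Σ_{s=t}^m |I ∩ Q s| ≤ Σ_{s=t}^m σ s` for all `1 ≤ t ≤ m`. -/
def NIndep {α : Type*} [DecidableEq α] (m : ℕ) (Q : ℕ → Finset α) (σ : ℕ → ℤ)
    (I : Finset α) : Prop :=
  ∀ t ∈ Finset.Icc 1 m,
    (∑ s ∈ Finset.Icc t m, ((I ∩ Q s).card : ℤ)) ≤ ∑ s ∈ Finset.Icc t m, σ s

/-- The rank of `S` with respect to an independence predicate: the maximum cardinality of
an independent subset of `S`. -/
noncomputable def nrank {α : Type*} (pred : Finset α → Prop) (S : Finset α) : ℕ :=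
  sSup {c : ℕ | ∃ I : Finset α, I ⊆ S ∧ pred I ∧ I.card = c}

/-- `B` is a base (maximal independent set) for the independence predicate `pred`. -/
def IsNBase {α : Type*} (pred : Finset α → Prop) (B : Finset α) : Prop :=
  pred B ∧ ∀ B' : Finset α, pred B' → B ⊆ B' → B' = B

/-- The thresholds `τ_1 = ⋯ = τ_{r−1} = n/2 − g` and `τ_r = n/2 − g + gr/4`, for
`r = 2k+1`. -/
def tauF (n g k : ℕ) : ℕ → ℤ :=
  fun t => if t = 2 * k + 1 then (n : ℤ) / 2 - (g : ℤ) + ((g : ℤ) * (2 * (k : ℤ) + 1)) / 4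
    else (n : ℤ) / 2 - (g : ℤ)

/-- `θ = n/2 − g/4`. -/
def thetaF (n g : ℕ) : ℤ := (n : ℤ) / 2 - (g : ℤ) / 4

/-- `ℓ_t(x) = Σ_{s=t}^{2k+1} (x_s − τ_s)`. -/
def ellT (n g k : ℕ) (x : ℕ → ℤ) (t : ℕ) : ℤ :=
  ∑ s ∈ Finset.Icc t (2 * k + 1), (x s - tauF n g k s)

/-- The signature of `S` with respect to the partition `P`. -/
def sigF {α : Type*} [DecidableEq α] (P : ℕ → Finset α) (S : Finset α) : ℕ → ℤ :=
  fun j => ((S ∩ P j).card : ℤ)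

/-- The partition of `M_odd`: `(P_1 ∪ P_2, P_3 ∪ P_4, …, P_{r−2} ∪ P_{r−1}, P_r)`,
indexed `1, …, k+1`. -/
def QoddF {α : Type*} [DecidableEq α] (P : ℕ → Finset α) (k : ℕ) : ℕ → Finset α :=
  fun j => if j ≤ k then P (2 * j - 1) ∪ P (2 * j) else P (2 * k + 1)

/-- The thresholds of `M_odd`: `(τ_1 + τ_2, τ_3 + τ_4, …, τ_{r−2} + τ_{r−1}, τ_r)`. -/
def soddF (n g k : ℕ) : ℕ → ℤ :=
  fun j => if j ≤ k then tauF n g k (2 * j - 1) + tauF n g k (2 * j)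
    else tauF n g k (2 * k + 1)

/-- The partition of `M_even`: `(P_1, P_2 ∪ P_3, P_4 ∪ P_5, …, P_{r−1} ∪ P_r)`,
indexed `1, …, k+1`. -/
def QevenF {α : Type*} [DecidableEq α] (P : ℕ → Finset α) (k : ℕ) : ℕ → Finset α :=
  fun j => if j = 1 then P 1 else P (2 * j - 2) ∪ P (2 * j - 1)

/-- The thresholds of `M_even`: `(n, τ_2 + τ_3, τ_4 + τ_5, …, τ_{r−1} + τ_r)`. -/
def sevenF (n g k : ℕ) : ℕ → ℤ :=
  fun j => if j = 1 then (n : ℤ) else tauF n g k (2 * j - 2) + tauF n g k (2 * j - 1)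

/-- The partition of `M'_even`:
`(P_1, P_2 ∪ P_3, …, P_{r−3} ∪ P_{r−2}, P_{r−1}, P_r)`, indexed `1, …, k+2`. -/
def QevenF' {α : Type*} [DecidableEq α] (P : ℕ → Finset α) (k : ℕ) : ℕ → Finset α :=
  fun j => if j = 1 then P 1
    else if j ≤ k then P (2 * j - 2) ∪ P (2 * j - 1)
    else if j = k + 1 then P (2 * k)
    else P (2 * k + 1)

/-- The thresholds of `M'_even`:
`(n, τ_2 + τ_3, …, τ_{r−3} + τ_{r−2}, τ_{r−1} + τ_r − θ, θ)`. -/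
def sevenF' (n g k : ℕ) : ℕ → ℤ :=
  fun j => if j = 1 then (n : ℤ)
    else if j ≤ k then tauF n g k (2 * j - 2) + tauF n g k (2 * j - 1)
    else if j = k + 1 then tauF n g k (2 * k) + tauF n g k (2 * k + 1) - thetaF n g
    else thetaF n g

/-- `x` is `i`-balanced: `x_i − g/8 ≤ x_j ≤ x_i + g/8` for all `i < j ≤ r`
(stated multiplied through by `8`). -/
def iBal (g r i : ℕ) (x : ℕ → ℤ) : Prop :=
  ∀ j : ℕ, i < j → j ≤ r → 8 * (x i - x j) ≤ (g : ℤ) ∧ 8 * (x j - x i) ≤ (g : ℤ)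

/-!
The rank of `S` in a nested matroid with parts `Q_s` and nonnegative thresholds `σ_s` is
`min_t (Σ_{s<t} |S ∩ Q_s| + Σ_{s≥t} σ_s)`: each term bounds every independent subset of `S`, and
a maximum one attains the term at its first tight constraint. The three matroids merge
consecutive parts `P_j`, so their terms are the terms `Σ_j x_j − ℓ_u(x)` of the fine matroid on
`P` at the block boundaries `u` (for `M_even`, `M'_even` with `τ_1` replaced by `n`, which does
not involve `x`).

For `u ≤ i + 1` the term only involves `x_1, …, x_i`, which `x` and `x'` share. For `u > i + 1`
balance leaves two cases, decided by `x_i` alone. If `x_i < τ_1 + g/8`, then `ℓ_u(x) < 0` and the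
term exceeds the term `Σ_j x_j` at `u = r + 1`. Otherwise `x_j ≥ τ_j` for `i ≤ j < r`, so `ℓ`
decreases on `[i, r]` and the term exceeds the one at the boundary in `{i, i + 1}`. Hence both
minima are attained at shared terms and agree. `M'_even` only adds the term
`Σ_{j<r} x_j + θ` at `u = r`, dominated by the term at `r + 1` if `x_r ≤ θ` and otherwise
(`x_j > τ_1 + g/2` for `j ≥ i`) by the one at the boundary in `{i, i + 1}`.
-/

open Finset

lemma IsLeast.eq_of_forall_exists_le {ι β : Type*} [PartialOrder β] {f f' : ι → β}
    {U U' : Set ι} {a a' : β} (ha : IsLeast (f '' U) a) (ha' : IsLeast (f' '' U') a')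
    (h : ∀ u ∈ U, ∃ u' ∈ U', f' u' ≤ f u) (h' : ∀ u' ∈ U', ∃ u ∈ U, f u ≤ f' u') : a = a' := by
  obtain ⟨u, hu, rfl⟩ := ha.1
  obtain ⟨u', hu', rfl⟩ := ha'.1
  obtain ⟨v, hv, hvu'⟩ := h' u' hu'
  obtain ⟨v', hv', hv'u⟩ := h u hu
  exact le_antisymm ((ha.2 ⟨v, hv, rfl⟩).trans hvu') ((ha'.2 ⟨v', hv', rfl⟩).trans hv'u)

lemma sum_Icc_eq_sum_Ico_add_sum_Icc {M : Type*} [AddCommMonoid M] (f : ℕ → M) {a b c : ℕ}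
    (hab : a ≤ b) (hbc : b ≤ c + 1) :
    ∑ j ∈ Icc a c, f j = ∑ j ∈ Ico a b, f j + ∑ j ∈ Icc b c, f j := by
  rw [← Ico_add_one_right_eq_Icc, ← Ico_add_one_right_eq_Icc, sum_Ico_consecutive f hab hbc]

section NestedMatroid

variable {α : Type*} [DecidableEq α] {m : ℕ} {Q : ℕ → Finset α} {σ : ℕ → ℤ}

def nestedRankBound (m : ℕ) (σ a : ℕ → ℤ) (t : ℕ) : ℤ :=
  ∑ s ∈ Ico 1 t, a s + ∑ s ∈ Icc t m, σ s

lemma card_eq_sum_card_inter (hQ : (Icc 1 m : Set ℕ).PairwiseDisjoint Q) {I : Finset α}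
    (hI : ∀ a ∈ I, ∃ s ∈ Icc 1 m, a ∈ Q s) :
    #I = ∑ s ∈ Icc 1 m, #(I ∩ Q s) := by
  rw [← card_biUnion (hQ.mono_on fun s _ => inter_subset_right), ← inter_biUnion,
    inter_eq_left.mpr fun a ha => mem_biUnion.mpr (hI a ha)]

lemma NIndep.card_le_nestedRankBound {S I : Finset α}
    (hQ : (Icc 1 m : Set ℕ).PairwiseDisjoint Q) (hS : ∀ a ∈ S, ∃ s ∈ Icc 1 m, a ∈ Q s)
    (hI : NIndep m Q σ I) (hIS : I ⊆ S) {t : ℕ} (ht : t ∈ Icc 1 (m + 1)) :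
    (#I : ℤ) ≤ nestedRankBound m σ (fun s => #(S ∩ Q s)) t := by
  rw [mem_Icc] at ht
  rw [card_eq_sum_card_inter hQ fun a ha => hS a (hIS ha), Nat.cast_sum,
    sum_Icc_eq_sum_Ico_add_sum_Icc _ ht.1 ht.2]
  refine add_le_add (sum_le_sum fun s _ => ?_) ?_
  · exact_mod_cast card_le_card (inter_subset_inter_right hIS)
  · rcases le_or_gt t m with htm | htm
    · exact hI t (mem_Icc.mpr ⟨ht.1, htm⟩)
    · simp [Icc_eq_empty_of_lt htm]

lemma card_insert_inter_eq (hQ : (Icc 1 m : Set ℕ).PairwiseDisjoint Q) {I : Finset α} {a : α}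
    (ha : a ∉ I) {s u : ℕ} (hs : s ∈ Icc 1 m) (hu : u ∈ Icc 1 m) (has : a ∈ Q s) :
    #(insert a I ∩ Q u) = #(I ∩ Q u) + if u = s then 1 else 0 := by
  split_ifs with hus
  · subst hus
    rw [insert_inter_of_mem has, card_insert_of_notMem fun h => ha (mem_inter.mp h).1]
  · have hau : a ∉ Q u := fun hau =>
      disjoint_left.mp (hQ (mem_coe.mpr hs) (mem_coe.mpr hu) (Ne.symm hus)) has hau
    rw [insert_inter_of_notMem hau, add_zero]

lemma exists_tight_of_not_indep_insert (hQ : (Icc 1 m : Set ℕ).PairwiseDisjoint Q)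
    {I : Finset α} (hI : NIndep m Q σ I) {a : α} (ha : a ∉ I) {s : ℕ} (hs : s ∈ Icc 1 m)
    (has : a ∈ Q s) (hins : ¬ NIndep m Q σ (insert a I)) :
    ∃ t ∈ Icc 1 s, ∑ u ∈ Icc t m, (#(I ∩ Q u) : ℤ) = ∑ u ∈ Icc t m, σ u := by
  simp only [NIndep, not_forall, not_le] at hins
  obtain ⟨t, ht, hlt⟩ := hins
  have hsum : ∑ u ∈ Icc t m, (#(insert a I ∩ Q u) : ℤ)
      = ∑ u ∈ Icc t m, (#(I ∩ Q u) : ℤ) + if s ∈ Icc t m then 1 else 0 := by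
    rw [← sum_ite_eq' (Icc t m) s (fun _ => (1 : ℤ)), ← sum_add_distrib]
    refine sum_congr rfl fun u hu => ?_
    have hu' : u ∈ Icc 1 m := by simp only [mem_Icc] at ht hu ⊢; omega
    rw [card_insert_inter_eq hQ ha hs hu' has]
    split_ifs <;> simp_all
  have hle := hI t ht
  split_ifs at hsum with hst
  · simp only [mem_Icc] at ht hst
    exact ⟨t, mem_Icc.mpr ⟨ht.1, hst.1⟩, by omega⟩
  · omega

lemma exists_card_eq_nestedRankBound_of_maximal (hQ : (Icc 1 m : Set ℕ).PairwiseDisjoint Q)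
    {S I : Finset α} (hS : ∀ a ∈ S, ∃ s ∈ Icc 1 m, a ∈ Q s) (hI : NIndep m Q σ I)
    (hIS : I ⊆ S) (hmax : ∀ a ∈ S, a ∉ I → ¬ NIndep m Q σ (insert a I)) :
    ∃ t ∈ Icc 1 (m + 1), (#I : ℤ) = nestedRankBound m σ (fun s => #(S ∩ Q s)) t := by
  classical
  let tight (t : ℕ) : Prop :=
    t = m + 1 ∨ 1 ≤ t ∧ ∑ u ∈ Icc t m, (#(I ∩ Q u) : ℤ) = ∑ u ∈ Icc t m, σ u
  have hex : ∃ t, tight t := ⟨m + 1, Or.inl rfl⟩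
  -- by maximality of `I`, every part below the first tight constraint is saturated
  set t₀ := Nat.find hex
  have ht₀ : tight t₀ := Nat.find_spec hex
  have ht₀1 : 1 ≤ t₀ := by rcases ht₀ with h | h <;> omega
  have ht₀m : t₀ ≤ m + 1 := Nat.find_min' hex (Or.inl rfl)
  have hsat : ∀ s ∈ Ico 1 t₀, #(I ∩ Q s) = #(S ∩ Q s) := by
    intro s hs
    rw [mem_Ico] at hs
    by_contra hne
    obtain ⟨a, haS, haI⟩ : ∃ a ∈ S ∩ Q s, a ∉ I ∩ Q s := by
      by_contra! h
      exact hne (le_antisymm (card_le_card (inter_subset_inter_right hIS)) (card_le_card h))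
    have hs' : s ∈ Icc 1 m := mem_Icc.mpr ⟨hs.1, by omega⟩
    have haI' : a ∉ I := fun h => haI (mem_inter.mpr ⟨h, (mem_inter.mp haS).2⟩)
    obtain ⟨t, ht, htight⟩ := exists_tight_of_not_indep_insert hQ hI haI' hs'
      (mem_inter.mp haS).2 (hmax a (mem_inter.mp haS).1 haI')
    rw [mem_Icc] at ht
    exact Nat.find_min hex (by omega : t < t₀) (Or.inr ⟨ht.1, htight⟩)
  refine ⟨t₀, mem_Icc.mpr ⟨ht₀1, ht₀m⟩, ?_⟩
  rw [card_eq_sum_card_inter hQ fun a ha => hS a (hIS ha), Nat.cast_sum,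
    sum_Icc_eq_sum_Ico_add_sum_Icc _ ht₀1 ht₀m, nestedRankBound,
    sum_congr rfl fun s hs => congrArg (Nat.cast (R := ℤ)) (hsat s hs)]
  rcases ht₀ with htop | ⟨-, htight⟩
  · simp [htop]
  · rw [htight]

theorem isLeast_nrank (hQ : (Icc 1 m : Set ℕ).PairwiseDisjoint Q) {S : Finset α}
    (hS : ∀ a ∈ S, ∃ s ∈ Icc 1 m, a ∈ Q s) (hempty : NIndep m Q σ ∅) :
    IsLeast (nestedRankBound m σ (fun s => #(S ∩ Q s)) '' Set.Icc 1 (m + 1))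
      (nrank (NIndep m Q σ) S : ℤ) := by
  classical
  obtain ⟨I, hImem, hImax⟩ := exists_max_image ({J ∈ S.powerset | NIndep m Q σ J}) card
    ⟨∅, mem_filter.mpr ⟨empty_mem_powerset S, hempty⟩⟩
  rw [mem_filter, mem_powerset] at hImem
  have hrank : nrank (NIndep m Q σ) S = #I := by
    refine IsGreatest.csSup_eq ⟨⟨I, hImem.1, hImem.2, rfl⟩, ?_⟩
    rintro _ ⟨J, hJS, hJ, rfl⟩
    exact hImax J (mem_filter.mpr ⟨mem_powerset.mpr hJS, hJ⟩)
  have hmax : ∀ a ∈ S, a ∉ I → ¬ NIndep m Q σ (insert a I) := fun a ha haI hins => by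
    have := hImax _ (mem_filter.mpr ⟨mem_powerset.mpr (insert_subset ha hImem.1), hins⟩)
    rw [card_insert_of_notMem haI] at this
    omega
  rw [hrank]
  refine ⟨?_, ?_⟩
  · obtain ⟨t, ht, heq⟩ := exists_card_eq_nestedRankBound_of_maximal hQ hS hImem.2 hImem.1 hmax
    exact ⟨t, by simpa using ht, heq.symm⟩
  · rintro _ ⟨t, ht, rfl⟩
    exact hImem.2.card_le_nestedRankBound hQ hS hImem.1 (by simpa using ht)

end NestedMatroid

section Coarsening

variable {α : Type*} [DecidableEq α] {b : ℕ → ℕ}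

lemma pairwiseDisjoint_Ico_cuts (hb : Monotone b) (s : Set ℕ) :
    s.PairwiseDisjoint fun t => Ico (b t) (b (t + 1)) := fun t _ t' _ htt' => by
  simpa [Function.onFun, ← disjoint_coe] using hb.pairwise_disjoint_on_Ico_succ htt'

lemma biUnion_Ico_cuts (hb : Monotone b) {p q : ℕ} (hpq : p ≤ q) :
    (Ico p q).biUnion (fun t => Ico (b t) (b (t + 1))) = Ico (b p) (b q) := by
  induction q, hpq using Nat.le_induction with
  | base => simp
  | succ q hpq ih =>
    rw [Nat.Ico_succ_right_eq_insert_Ico hpq, biUnion_insert, ih, union_comm,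
      Ico_union_Ico_eq_Ico (hb hpq) (hb q.le_succ)]

lemma sum_Ico_cuts (hb : Monotone b) {M : Type*} [AddCommMonoid M] (f : ℕ → M) {p q : ℕ}
    (hpq : p ≤ q) :
    ∑ t ∈ Ico p q, ∑ j ∈ Ico (b t) (b (t + 1)), f j = ∑ j ∈ Ico (b p) (b q), f j := by
  rw [← biUnion_Ico_cuts hb hpq, sum_biUnion (pairwiseDisjoint_Ico_cuts hb _)]

/-- The nested matroid `(Q, σ)` with `m` parts arises from the nested matroid `(P, ρ)` with `r`
parts by merging the consecutive blocks `[b t, b (t + 1))` of parts. -/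
structure IsBlockCoarsening (r m : ℕ) (b : ℕ → ℕ) (P Q : ℕ → Finset α) (ρ σ : ℕ → ℤ) :
    Prop where
  mono : Monotone b
  first : b 1 = 1
  last : b (m + 1) = r + 1
  part_eq : ∀ t ∈ Icc 1 m, Q t = (Ico (b t) (b (t + 1))).biUnion P
  threshold_eq : ∀ t ∈ Icc 1 m, σ t = ∑ j ∈ Ico (b t) (b (t + 1)), ρ j

namespace IsBlockCoarsening

variable {r m : ℕ} {P Q : ℕ → Finset α} {ρ σ : ℕ → ℤ}

lemma cut_mem (h : IsBlockCoarsening r m b P Q ρ σ) {t : ℕ} (ht : t ∈ Icc 1 (m + 1)) :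
    b t ∈ Icc 1 (r + 1) := by
  rw [mem_Icc] at ht ⊢
  exact ⟨h.first ▸ h.mono ht.1, h.last ▸ h.mono ht.2⟩

lemma block_subset (h : IsBlockCoarsening r m b P Q ρ σ) {t : ℕ} (ht : t ∈ Icc 1 m) :
    Ico (b t) (b (t + 1)) ⊆ Icc 1 r := by
  rw [mem_Icc] at ht
  have h1 := h.cut_mem (mem_Icc.mpr ⟨ht.1, by omega⟩)
  have h2 := h.cut_mem (mem_Icc.mpr ⟨by omega, by omega⟩ : t + 1 ∈ Icc 1 (m + 1))
  intro j hj
  simp only [mem_Icc, mem_Ico] at h1 h2 hj ⊢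
  omega

lemma sum_threshold (h : IsBlockCoarsening r m b P Q ρ σ) {t : ℕ} (ht : t ∈ Icc 1 (m + 1)) :
    ∑ s ∈ Icc t m, σ s = ∑ j ∈ Icc (b t) r, ρ j := by
  rw [mem_Icc] at ht
  rw [← Ico_add_one_right_eq_Icc, ← Ico_add_one_right_eq_Icc, ← h.last,
    ← sum_Ico_cuts h.mono ρ ht.2]
  exact sum_congr rfl fun s hs => h.threshold_eq s (by simp only [mem_Ico, mem_Icc] at hs ⊢; omega)

lemma card_inter_part (h : IsBlockCoarsening r m b P Q ρ σ)
    (hP : (Icc 1 r : Set ℕ).PairwiseDisjoint P) (S : Finset α) {t : ℕ} (ht : t ∈ Icc 1 m) :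
    #(S ∩ Q t) = ∑ j ∈ Ico (b t) (b (t + 1)), #(S ∩ P j) := by
  rw [h.part_eq t ht, inter_biUnion, card_biUnion]
  exact (hP.subset (by exact_mod_cast h.block_subset ht)).mono_on fun j _ => inter_subset_right

lemma pairwiseDisjoint (h : IsBlockCoarsening r m b P Q ρ σ)
    (hP : (Icc 1 r : Set ℕ).PairwiseDisjoint P) : (Icc 1 m : Set ℕ).PairwiseDisjoint Q := by
  intro t ht t' ht' htt'
  change Disjoint (Q t) (Q t')
  rw [h.part_eq t ht, h.part_eq t' ht', disjoint_biUnion_left]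
  intro j hj
  rw [disjoint_biUnion_right]
  intro j' hj'
  have hjj' : j ≠ j' := fun hjj' => disjoint_left.mp
    (pairwiseDisjoint_Ico_cuts h.mono Set.univ trivial trivial htt') hj (hjj' ▸ hj')
  exact hP (by exact_mod_cast h.block_subset ht hj) (by exact_mod_cast h.block_subset ht' hj')
    hjj'

lemma exists_mem_part (h : IsBlockCoarsening r m b P Q ρ σ) {a : α}
    (ha : ∃ j ∈ Icc 1 r, a ∈ P j) : ∃ t ∈ Icc 1 m, a ∈ Q t := by
  obtain ⟨j, hj, haj⟩ := ha
  have hj' : j ∈ Ico (b 1) (b (m + 1)) := by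
    rw [h.first, h.last]; simp only [mem_Ico, mem_Icc] at hj ⊢; omega
  rw [← biUnion_Ico_cuts h.mono (by omega), mem_biUnion] at hj'
  obtain ⟨t, ht, hjt⟩ := hj'
  have ht' : t ∈ Icc 1 m := by simp only [mem_Ico, mem_Icc] at ht ⊢; omega
  exact ⟨t, ht', h.part_eq t ht' ▸ mem_biUnion.mpr ⟨j, hjt, haj⟩⟩

lemma nestedRankBound_eq (h : IsBlockCoarsening r m b P Q ρ σ)
    (hP : (Icc 1 r : Set ℕ).PairwiseDisjoint P) (S : Finset α) {t : ℕ}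
    (ht : t ∈ Icc 1 (m + 1)) :
    nestedRankBound m σ (fun s => #(S ∩ Q s)) t = nestedRankBound r ρ (sigF P S) (b t) := by
  have ht' := mem_Icc.mp ht
  rw [nestedRankBound, nestedRankBound, h.sum_threshold ht,
    show Ico 1 (b t) = Ico (b 1) (b t) by rw [h.first], ← sum_Ico_cuts h.mono _ ht'.1]
  congr 1
  refine sum_congr rfl fun s hs => ?_
  rw [h.card_inter_part hP S (by simp only [mem_Ico, mem_Icc] at hs ⊢; omega), Nat.cast_sum]
  rfl

lemma nIndep_empty (h : IsBlockCoarsening r m b P Q ρ σ) (hρ : ∀ j ∈ Icc 1 r, 0 ≤ ρ j) :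
    NIndep m Q σ ∅ := by
  intro t ht
  rw [mem_Icc] at ht
  have hb := mem_Icc.mp (h.cut_mem (mem_Icc.mpr ⟨ht.1, by omega⟩))
  rw [h.sum_threshold (mem_Icc.mpr ⟨ht.1, by omega⟩)]
  simpa using sum_nonneg fun j hj => hρ j (by simp only [mem_Icc] at hj ⊢; omega)

theorem isLeast_nrank (h : IsBlockCoarsening r m b P Q ρ σ)
    (hP : (Icc 1 r : Set ℕ).PairwiseDisjoint P) (hcover : ∀ a, ∃ j ∈ Icc 1 r, a ∈ P j)
    (hρ : ∀ j ∈ Icc 1 r, 0 ≤ ρ j) (S : Finset α) :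
    IsLeast (nestedRankBound r ρ (sigF P S) '' (b '' Set.Icc 1 (m + 1)))
      (nrank (NIndep m Q σ) S : ℤ) := by
  have := _root_.isLeast_nrank (h.pairwiseDisjoint hP) (fun a _ => h.exists_mem_part (hcover a))
    (h.nIndep_empty hρ) (S := S)
  rwa [Set.image_congr fun t ht => h.nestedRankBound_eq hP S (by simpa using ht),
    ← Set.image_image] at this

end IsBlockCoarsening

end Coarsening

section Signature

variable {n g k : ℕ} {x x' : ℕ → ℤ} {i u : ℕ}

lemma nestedRankBound_congr_prefix {r : ℕ} {ρ : ℕ → ℤ} (h : ∀ j ∈ Ico 1 u, x j = x' j) :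
    nestedRankBound r ρ x u = nestedRankBound r ρ x' u := by
  rw [nestedRankBound, nestedRankBound, sum_congr rfl h]

lemma nestedRankBound_top {r : ℕ} (ρ : ℕ → ℤ) (x : ℕ → ℤ) :
    nestedRankBound r ρ x (r + 1) = ∑ j ∈ Icc 1 r, x j := by
  simp [nestedRankBound, Ico_add_one_right_eq_Icc]

lemma tauF_of_ne {j : ℕ} (hj : j ≠ 2 * k + 1) : tauF n g k j = (n : ℤ) / 2 - g := if_neg hj

lemma four_mul_tauF_top_sub (hg : 4 ∣ g) :
    4 * (tauF n g k (2 * k + 1) - ((n : ℤ) / 2 - g)) = g * (2 * k + 1) := by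
  obtain ⟨g', rfl⟩ := hg
  simp only [tauF]
  push_cast
  rw [show (4 * g' : ℤ) * (2 * k + 1) = 4 * (g' * (2 * k + 1)) by ring,
    Int.mul_ediv_cancel_left _ four_ne_zero]
  ring

lemma four_mul_thetaF_sub (hg : 4 ∣ g) : 4 * (thetaF n g - ((n : ℤ) / 2 - g)) = 3 * g := by
  obtain ⟨g', rfl⟩ := hg
  simp only [thetaF]
  push_cast
  omega

lemma tauF_nonneg (h : 4 * g ≤ n) (j : ℕ) : 0 ≤ tauF n g k j := by
  have : (0 : ℤ) ≤ g * (2 * k + 1) / 4 := by positivity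
  unfold tauF
  split_ifs <;> omega

lemma ellT_eq (hu : u ≤ 2 * k + 1) :
    ellT n g k x u = ∑ j ∈ Icc u (2 * k), (x j - ((n : ℤ) / 2 - g))
      + (x (2 * k + 1) - tauF n g k (2 * k + 1)) := by
  rw [ellT, sum_Icc_succ_top (by omega)]
  congr 1
  exact sum_congr rfl fun j hj => by rw [tauF_of_ne (by simp only [mem_Icc] at hj; omega)]

lemma nestedRankBound_eq_sub_ellT {ρ : ℕ → ℤ} (hu : 1 ≤ u) (hu' : u ≤ 2 * k + 2)
    (hρ : ∀ j ∈ Icc u (2 * k + 1), ρ j = tauF n g k j) :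
    nestedRankBound (2 * k + 1) ρ x u = ∑ j ∈ Icc 1 (2 * k + 1), x j - ellT n g k x u := by
  rw [nestedRankBound, sum_congr rfl hρ, ellT, sum_sub_distrib,
    sum_Icc_eq_sum_Ico_add_sum_Icc x hu hu']
  ring

/-- The suffix of `x` stays below `τ_1 + g/4`, too little to make up for the surplus `gr/4`
of `τ_r`. -/
lemma ellT_neg (hg : 4 ∣ g) (hbal : iBal g (2 * k + 1) i x) (hi : 1 ≤ i)
    (hx : 8 * (x i - ((n : ℤ) / 2 - g)) < g) (hiu : i < u) (hu : u ≤ 2 * k + 1) :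
    ellT n g k x u < 0 := by
  have hterm : ∀ j ∈ Icc u (2 * k), 8 * (x j - ((n : ℤ) / 2 - g)) ≤ 2 * g := fun j hj => by
    have := (hbal j (by simp only [mem_Icc] at hj; omega) (by simp only [mem_Icc] at hj; omega)).2
    omega
  have hsum := sum_le_card_nsmul _ _ _ hterm
  rw [← mul_sum, nsmul_eq_mul, Nat.card_Icc] at hsum
  have hlast := (hbal (2 * k + 1) (by omega) le_rfl).2
  have hcard : ((2 * k + 1 - u : ℕ) : ℤ) ≤ 2 * k - 1 := by omega
  have := four_mul_tauF_top_sub (n := n) (k := k) hg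
  rw [ellT_eq hu]
  nlinarith [mul_le_mul_of_nonneg_right hcard (by positivity : (0 : ℤ) ≤ 2 * g)]

/-- Every term `x_j - τ_j` with `i ≤ j < r` is nonnegative. -/
lemma ellT_le_ellT (hbal : iBal g (2 * k + 1) i x) (hx : g ≤ 8 * (x i - ((n : ℤ) / 2 - g)))
    {u' : ℕ} (hiu' : i ≤ u') (hu'u : u' ≤ u) (hu : u ≤ 2 * k + 1) :
    ellT n g k x u ≤ ellT n g k x u' := by
  rw [ellT, ellT, sum_Icc_eq_sum_Ico_add_sum_Icc _ hu'u (by omega), le_add_iff_nonneg_left]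
  refine sum_nonneg fun j hj => ?_
  rw [mem_Ico] at hj
  rw [tauF_of_ne (by omega)]
  rcases hiu'.trans hj.1 |>.eq_or_lt with rfl | hij
  · omega
  · have := (hbal j hij (by omega)).1
    omega

lemma sub_thetaF_le_ellT (hg : 4 ∣ g) (hbal : iBal g (2 * k + 1) i x) (hir : i < 2 * k + 1)
    (hx : thetaF n g < x (2 * k + 1)) (hiu : i ≤ u) (hu : u ≤ k + 1) :
    x (2 * k + 1) - thetaF n g ≤ ellT n g k x u := by
  have hxi := (hbal (2 * k + 1) hir le_rfl).2
  have hθ := four_mul_thetaF_sub (n := n) hg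
  have hterm : ∀ j ∈ Icc u (2 * k), (g : ℤ) ≤ 2 * (x j - ((n : ℤ) / 2 - g)) := fun j hj => by
    rw [mem_Icc] at hj
    rcases hiu.trans hj.1 |>.eq_or_lt with rfl | hij
    · omega
    · have := (hbal j hij (by omega)).1
      omega
  have hsum := card_nsmul_le_sum _ _ _ hterm
  rw [← mul_sum, nsmul_eq_mul, Nat.card_Icc] at hsum
  have hcard : (k : ℤ) ≤ ((2 * k + 1 - u : ℕ) : ℤ) := by omega
  have := four_mul_tauF_top_sub (n := n) (k := k) hg
  rw [ellT_eq (by omega)]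
  nlinarith [mul_le_mul_of_nonneg_right hcard (by positivity : (0 : ℤ) ≤ g)]

lemma forall_exists_nestedRankBound_le {ρ : ℕ → ℤ} {U : Set ℕ} {u₀ : ℕ} (hg : 4 ∣ g) (hi : 1 ≤ i)
    (hbal : iBal g (2 * k + 1) i x) (hagree : ∀ j ∈ Icc 1 i, x j = x' j)
    (hsum : ∑ j ∈ Icc 1 (2 * k + 1), x j = ∑ j ∈ Icc 1 (2 * k + 1), x' j)
    (hU : ∀ u ∈ U, u ≤ 2 * k + 2) (htop : 2 * k + 2 ∈ U) (hu₀ : u₀ ∈ U) (hiu₀ : i ≤ u₀)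
    (hu₀i : u₀ ≤ i + 1) (hρ : ∀ j ∈ Icc u₀ (2 * k + 1), ρ j = tauF n g k j) :
    ∀ u ∈ U, ∃ u' ∈ U,
      nestedRankBound (2 * k + 1) ρ x' u' ≤ nestedRankBound (2 * k + 1) ρ x u := by
  have hprefix : ∀ {u}, u ≤ i + 1 →
      nestedRankBound (2 * k + 1) ρ x' u = nestedRankBound (2 * k + 1) ρ x u := fun hu =>
    nestedRankBound_congr_prefix fun j hj =>
      (hagree j (by simp only [mem_Ico, mem_Icc] at hj ⊢; omega)).symm
  have hρu : ∀ {u}, u₀ ≤ u → ∀ j ∈ Icc u (2 * k + 1), ρ j = tauF n g k j := fun hu j hj =>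
    hρ j (by simp only [mem_Icc] at hj ⊢; omega)
  intro u hu
  by_cases hui : u ≤ i + 1
  · exact ⟨u, hu, (hprefix hui).le⟩
  rcases (hU u hu).lt_or_eq with hur | rfl
  · rw [nestedRankBound_eq_sub_ellT (by omega) (by omega) (hρu (by omega))]
    rcases lt_or_ge (8 * (x i - ((n : ℤ) / 2 - g))) g with hA | hB
    · refine ⟨2 * k + 2, htop, ?_⟩
      rw [nestedRankBound_top, ← hsum]
      linarith [ellT_neg hg hbal hi hA (by omega : i < u) (by omega : u ≤ 2 * k + 1)]
    · refine ⟨u₀, hu₀, ?_⟩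
      rw [hprefix hu₀i, nestedRankBound_eq_sub_ellT (by omega) (by omega) (hρu le_rfl)]
      linarith [ellT_le_ellT hbal hB hiu₀ (by omega : u₀ ≤ u) (by omega : u ≤ 2 * k + 1)]
  · exact ⟨2 * k + 2, htop, by rw [nestedRankBound_top, nestedRankBound_top, hsum]⟩

end Signature

section Cuts

/- The `t`-th part of `M_odd`, `M_even`, `M'_even` is the union of the `P_j` with
`j ∈ [cut t, cut (t + 1))`; the cuts are `1, 3, …, 2k+1, 2k+2`, `1, 2, 4, …, 2k+2` and
`1, 2, 4, …, 2k, 2k+1, 2k+2`. -/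

def oddCut (k t : ℕ) : ℕ := min (2 * t - 1) (2 * k + 2)

def evenCut (t : ℕ) : ℕ := max 1 (2 * t - 2)

def evenCut' (k t : ℕ) : ℕ := if t ≤ k + 1 then evenCut t else t + k - 1

/-- Thresholds on the single parts `P_j` whose block sums are the thresholds of `M_even`;
`tauEven'` does the same for `M'_even`. -/
def tauEven (n g k : ℕ) : ℕ → ℤ := Function.update (tauF n g k) 1 n

def tauEven' (n g k j : ℕ) : ℤ :=
  if j = 2 * k then tauF n g k (2 * k) + tauF n g k (2 * k + 1) - thetaF n g
  else if j = 2 * k + 1 then thetaF n g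
  else tauEven n g k j

variable {n g k j : ℕ}

lemma tauEven_of_ne (hj : j ≠ 1) : tauEven n g k j = tauF n g k j :=
  Function.update_of_ne hj _ _

lemma tauEven'_one (hk : 1 ≤ k) : tauEven' n g k 1 = n := by
  rw [tauEven', if_neg (by omega), if_neg (by omega), tauEven, Function.update_self]

lemma tauEven'_of_lt (hj : j ≠ 1) (hjk : j < 2 * k) : tauEven' n g k j = tauF n g k j := by
  rw [tauEven', if_neg (by omega), if_neg (by omega), tauEven_of_ne hj]

lemma tauEven'_two_mul :
    tauEven' n g k (2 * k) = tauF n g k (2 * k) + tauF n g k (2 * k + 1) - thetaF n g :=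
  if_pos rfl

lemma tauEven'_top : tauEven' n g k (2 * k + 1) = thetaF n g := by
  rw [tauEven', if_neg (by omega), if_pos rfl]

lemma Ico_eq_singleton_of_eq {a c : ℕ} (p : ℕ) (ha : a = p) (hc : c = p + 1) :
    Ico a c = {p} := by
  rw [ha, hc, Nat.Ico_succ_singleton]

lemma Ico_eq_pair_of_eq {a c : ℕ} (p q : ℕ) (ha : a = p) (hq : q = p + 1) (hc : c = q + 1) :
    Ico a c = {p, q} := by
  ext j; simp only [mem_Ico, mem_insert, mem_singleton]; omega

end Cuts

section Instances

variable {α : Type*} [DecidableEq α] (P : ℕ → Finset α) (n g k : ℕ)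

lemma isBlockCoarsening_odd :
    IsBlockCoarsening (2 * k + 1) (k + 1) (oddCut k) P (QoddF P k) (tauF n g k) (soddF n g k)
    where
  mono a b h := by unfold oddCut; omega
  first := rfl
  last := by unfold oddCut; omega
  part_eq t ht := by
    rw [mem_Icc] at ht
    unfold QoddF
    split_ifs with htk
    · rw [Ico_eq_pair_of_eq (2 * t - 1) (2 * t) (by unfold oddCut; omega) (by omega)
        (by unfold oddCut; omega), biUnion_insert, singleton_biUnion]
    · rw [Ico_eq_singleton_of_eq (2 * k + 1) (by unfold oddCut; omega)
        (by unfold oddCut; omega), singleton_biUnion]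
  threshold_eq t ht := by
    rw [mem_Icc] at ht
    unfold soddF
    split_ifs with htk
    · rw [Ico_eq_pair_of_eq (2 * t - 1) (2 * t) (by unfold oddCut; omega) (by omega)
        (by unfold oddCut; omega), sum_pair (by omega)]
    · rw [Ico_eq_singleton_of_eq (2 * k + 1) (by unfold oddCut; omega)
        (by unfold oddCut; omega), sum_singleton]

lemma isBlockCoarsening_even :
    IsBlockCoarsening (2 * k + 1) (k + 1) evenCut P (QevenF P k) (tauEven n g k) (sevenF n g k)
    where
  mono a b h := by unfold evenCut; omega
  first := rfl
  last := by unfold evenCut; omega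
  part_eq t ht := by
    rw [mem_Icc] at ht
    unfold QevenF
    split_ifs with ht1
    · rw [Ico_eq_singleton_of_eq 1 (by unfold evenCut; omega) (by unfold evenCut; omega),
        singleton_biUnion]
    · rw [Ico_eq_pair_of_eq (2 * t - 2) (2 * t - 1) (by unfold evenCut; omega) (by omega)
        (by unfold evenCut; omega), biUnion_insert, singleton_biUnion]
  threshold_eq t ht := by
    rw [mem_Icc] at ht
    unfold sevenF
    split_ifs with ht1
    · rw [Ico_eq_singleton_of_eq 1 (by unfold evenCut; omega) (by unfold evenCut; omega),
        sum_singleton, tauEven, Function.update_self]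
    · rw [Ico_eq_pair_of_eq (2 * t - 2) (2 * t - 1) (by unfold evenCut; omega) (by omega)
        (by unfold evenCut; omega), sum_pair (by omega), tauEven_of_ne (by omega),
        tauEven_of_ne (by omega)]

lemma isBlockCoarsening_even' (hk : 1 ≤ k) :
    IsBlockCoarsening (2 * k + 1) (k + 2) (evenCut' k) P (QevenF' P k) (tauEven' n g k)
      (sevenF' n g k) where
  mono a b h := by unfold evenCut' evenCut; split_ifs <;> omega
  first := rfl
  last := by unfold evenCut'; split_ifs <;> omega
  part_eq t ht := by
    rw [mem_Icc] at ht
    unfold QevenF'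
    split_ifs with ht1 htk htk1
    · rw [Ico_eq_singleton_of_eq 1 (by unfold evenCut' evenCut; split_ifs <;> omega)
        (by unfold evenCut' evenCut; split_ifs <;> omega), singleton_biUnion]
    · rw [Ico_eq_pair_of_eq (2 * t - 2) (2 * t - 1)
        (by unfold evenCut' evenCut; split_ifs <;> omega) (by omega)
        (by unfold evenCut' evenCut; split_ifs <;> omega), biUnion_insert, singleton_biUnion]
    · rw [Ico_eq_singleton_of_eq (2 * k) (by unfold evenCut' evenCut; split_ifs <;> omega)
        (by unfold evenCut' evenCut; split_ifs <;> omega), singleton_biUnion]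
    · rw [Ico_eq_singleton_of_eq (2 * k + 1) (by unfold evenCut' evenCut; split_ifs <;> omega)
        (by unfold evenCut' evenCut; split_ifs <;> omega), singleton_biUnion]
  threshold_eq t ht := by
    rw [mem_Icc] at ht
    unfold sevenF'
    split_ifs with ht1 htk htk1
    · rw [Ico_eq_singleton_of_eq 1 (by unfold evenCut' evenCut; split_ifs <;> omega)
        (by unfold evenCut' evenCut; split_ifs <;> omega), sum_singleton, tauEven'_one hk]
    · rw [Ico_eq_pair_of_eq (2 * t - 2) (2 * t - 1)
        (by unfold evenCut' evenCut; split_ifs <;> omega) (by omega)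
        (by unfold evenCut' evenCut; split_ifs <;> omega), sum_pair (by omega),
        tauEven'_of_lt (by omega) (by omega), tauEven'_of_lt (by omega) (by omega)]
    · rw [Ico_eq_singleton_of_eq (2 * k) (by unfold evenCut' evenCut; split_ifs <;> omega)
        (by unfold evenCut' evenCut; split_ifs <;> omega), sum_singleton, tauEven'_two_mul]
    · rw [Ico_eq_singleton_of_eq (2 * k + 1) (by unfold evenCut' evenCut; split_ifs <;> omega)
        (by unfold evenCut' evenCut; split_ifs <;> omega), sum_singleton, tauEven'_top]

end Instances

section Comparison

variable {n g k i : ℕ} {x x' : ℕ → ℤ}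

lemma tauEven_nonneg (h : 4 * g ≤ n) (j : ℕ) : 0 ≤ tauEven n g k j := by
  rw [tauEven, Function.update_apply]
  split_ifs
  · positivity
  · exact tauF_nonneg h j

lemma tauEven'_nonneg (h : 4 * g ≤ n) (j : ℕ) : 0 ≤ tauEven' n g k j := by
  have htop : tauF n g k (2 * k + 1) = (n : ℤ) / 2 - g + g * (2 * k + 1) / 4 := if_pos rfl
  have : (0 : ℤ) ≤ g * (2 * k + 1) / 4 := by positivity
  rw [tauEven']
  split_ifs
  · rw [tauF_of_ne (by omega), htop, thetaF]
    omega
  · rw [thetaF]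
    omega
  · exact tauEven_nonneg h j

lemma forall_exists_nestedRankBound_le_odd (hg : 4 ∣ g) (hi1 : 1 ≤ i) (hi2 : 2 * i < 2 * k + 1)
    (hbal : iBal g (2 * k + 1) i x) (hagree : ∀ j ∈ Icc 1 i, x j = x' j)
    (hsum : ∑ j ∈ Icc 1 (2 * k + 1), x j = ∑ j ∈ Icc 1 (2 * k + 1), x' j) :
    ∀ u ∈ oddCut k '' Set.Icc 1 (k + 2), ∃ u' ∈ oddCut k '' Set.Icc 1 (k + 2),
      nestedRankBound (2 * k + 1) (tauF n g k) x' u'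
        ≤ nestedRankBound (2 * k + 1) (tauF n g k) x u :=
  forall_exists_nestedRankBound_le (u₀ := oddCut k (i / 2 + 1)) hg hi1 hbal hagree hsum
    (by rintro _ ⟨t, -, rfl⟩; unfold oddCut; omega)
    ⟨k + 2, by simp, by unfold oddCut; omega⟩ ⟨i / 2 + 1, by simp; omega, rfl⟩
    (by unfold oddCut; omega) (by unfold oddCut; omega) fun _ _ => rfl

lemma forall_exists_nestedRankBound_le_even (hg : 4 ∣ g) (hi1 : 1 ≤ i) (hi2 : 2 * i < 2 * k + 1)
    (hbal : iBal g (2 * k + 1) i x) (hagree : ∀ j ∈ Icc 1 i, x j = x' j)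
    (hsum : ∑ j ∈ Icc 1 (2 * k + 1), x j = ∑ j ∈ Icc 1 (2 * k + 1), x' j) :
    ∀ u ∈ evenCut '' Set.Icc 1 (k + 2), ∃ u' ∈ evenCut '' Set.Icc 1 (k + 2),
      nestedRankBound (2 * k + 1) (tauEven n g k) x' u'
        ≤ nestedRankBound (2 * k + 1) (tauEven n g k) x u :=
  forall_exists_nestedRankBound_le (u₀ := evenCut ((i + 1) / 2 + 1)) hg hi1 hbal hagree hsum
    (by rintro _ ⟨t, ht, rfl⟩; rw [Set.mem_Icc] at ht; unfold evenCut; omega)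
    ⟨k + 2, by simp, by unfold evenCut; omega⟩ ⟨(i + 1) / 2 + 1, by simp; omega, rfl⟩
    (by unfold evenCut; omega) (by unfold evenCut; omega)
    fun j hj => tauEven_of_ne (by simp only [mem_Icc] at hj; unfold evenCut at hj; omega)

lemma evenCut'_image (hk : 1 ≤ k) :
    evenCut' k '' Set.Icc 1 (k + 3) = insert (2 * k + 1) (evenCut '' Set.Icc 1 (k + 2)) := by
  ext u
  simp only [Set.mem_image, Set.mem_insert_iff, Set.mem_Icc]
  constructor
  · rintro ⟨t, ht, rfl⟩
    unfold evenCut'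
    split_ifs with htk
    · exact Or.inr ⟨t, ⟨ht.1, by omega⟩, rfl⟩
    · rcases (show t = k + 2 ∨ t = k + 3 by omega) with rfl | rfl
      · left; omega
      · exact Or.inr ⟨k + 2, by omega, by unfold evenCut; omega⟩
  · rintro (rfl | ⟨t, ht, rfl⟩)
    · exact ⟨k + 2, by omega, by unfold evenCut'; split_ifs <;> omega⟩
    · rcases (show t ≤ k + 1 ∨ t = k + 2 by omega) with htk | rfl
      · exact ⟨t, by omega, if_pos htk⟩
      · exact ⟨k + 3, by omega, by unfold evenCut' evenCut; split_ifs <;> omega⟩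

lemma nestedRankBound_tauEven' {u : ℕ} (hk : 1 ≤ k) (hu : u ≠ 2 * k + 1) (hu' : u ≤ 2 * k + 2) :
    nestedRankBound (2 * k + 1) (tauEven' n g k) x u
      = nestedRankBound (2 * k + 1) (tauEven n g k) x u := by
  rw [nestedRankBound, nestedRankBound]
  congr 1
  rcases (show u = 2 * k + 2 ∨ u ≤ 2 * k by omega) with rfl | hu
  · simp
  rw [sum_Icc_eq_sum_Ico_add_sum_Icc _ hu (by omega : 2 * k ≤ 2 * k + 1 + 1),
    sum_Icc_eq_sum_Ico_add_sum_Icc (tauEven n g k) hu (by omega : 2 * k ≤ 2 * k + 1 + 1),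
    sum_Icc_succ_top (by omega), sum_Icc_succ_top (by omega), Icc_self, sum_singleton,
    sum_singleton, tauEven'_two_mul, tauEven'_top, tauEven_of_ne (by omega),
    tauEven_of_ne (by omega)]
  have hlow : ∀ j ∈ Ico u (2 * k), tauEven' n g k j = tauEven n g k j := fun j hj => by
    rw [mem_Ico] at hj
    rw [tauEven', if_neg (by omega), if_neg (by omega)]
  rw [sum_congr rfl hlow]
  ring

lemma exists_le_nestedRankBound_tauEven' (hg : 4 ∣ g) (hi1 : 1 ≤ i) (hi2 : 2 * i < 2 * k + 1)
    (hbal : iBal g (2 * k + 1) i x) :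
    ∃ u ∈ evenCut '' Set.Icc 1 (k + 2), nestedRankBound (2 * k + 1) (tauEven n g k) x u
      ≤ nestedRankBound (2 * k + 1) (tauEven' n g k) x (2 * k + 1) := by
  have hval : nestedRankBound (2 * k + 1) (tauEven' n g k) x (2 * k + 1)
      = ∑ j ∈ Icc 1 (2 * k + 1), x j - (x (2 * k + 1) - thetaF n g) := by
    rw [nestedRankBound, Icc_self, sum_singleton, tauEven'_top, ← Ico_add_one_right_eq_Icc,
      sum_Ico_succ_top (a := 1) (b := 2 * k + 1) (by omega)]
    ring
  rw [hval]
  rcases le_or_gt (x (2 * k + 1)) (thetaF n g) with hx | hx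
  · refine ⟨2 * k + 2, ⟨k + 2, by simp, by unfold evenCut; omega⟩, ?_⟩
    rw [nestedRankBound_top]
    linarith
  · set u₀ := evenCut ((i + 1) / 2 + 1) with hu₀
    have hu₀i : i ≤ u₀ ∧ u₀ ≤ i + 1 ∧ 2 ≤ u₀ := by unfold evenCut at hu₀; omega
    refine ⟨u₀, ⟨(i + 1) / 2 + 1, by simp; omega, rfl⟩, ?_⟩
    rw [nestedRankBound_eq_sub_ellT (by omega) (by omega)
      fun j hj => tauEven_of_ne (by simp only [mem_Icc] at hj; omega)]
    linarith [sub_thetaF_le_ellT hg hbal (by omega) hx hu₀i.1 (by omega : u₀ ≤ k + 1)]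

lemma forall_exists_nestedRankBound_tauEven'_le (hk : 1 ≤ k) :
    ∀ u ∈ evenCut '' Set.Icc 1 (k + 2), ∃ u' ∈ evenCut' k '' Set.Icc 1 (k + 3),
      nestedRankBound (2 * k + 1) (tauEven' n g k) x u'
        ≤ nestedRankBound (2 * k + 1) (tauEven n g k) x u := by
  rintro _ ⟨t, ht, rfl⟩
  rw [Set.mem_Icc] at ht
  refine ⟨evenCut t, evenCut'_image hk ▸ Or.inr ⟨t, Set.mem_Icc.mpr ht, rfl⟩, ?_⟩
  rw [nestedRankBound_tauEven' hk (by unfold evenCut; omega) (by unfold evenCut; omega)]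

lemma forall_exists_nestedRankBound_tauEven_le (hk : 1 ≤ k) (hg : 4 ∣ g) (hi1 : 1 ≤ i)
    (hi2 : 2 * i < 2 * k + 1) (hbal : iBal g (2 * k + 1) i x) :
    ∀ u ∈ evenCut' k '' Set.Icc 1 (k + 3), ∃ u' ∈ evenCut '' Set.Icc 1 (k + 2),
      nestedRankBound (2 * k + 1) (tauEven n g k) x u'
        ≤ nestedRankBound (2 * k + 1) (tauEven' n g k) x u := by
  rw [evenCut'_image hk]
  rintro u (rfl | ⟨t, ht, rfl⟩)
  · exact exists_le_nestedRankBound_tauEven' hg hi1 hi2 hbal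
  · rw [Set.mem_Icc] at ht
    refine ⟨evenCut t, ⟨t, Set.mem_Icc.mpr ht, rfl⟩, ?_⟩
    rw [nestedRankBound_tauEven' hk (by unfold evenCut; omega) (by unfold evenCut; omega)]

end Comparison

theorem rank_suffix_indistinguishability_general
    {α : Type*} [DecidableEq α]
    (n g k : ℕ) (hg4 : 4 ∣ g)
    (hgrn : 5 * g * (2 * k + 1) ≤ n)
    (P : ℕ → Finset α)
    (hdisj : ∀ i ∈ Finset.Icc 1 (2 * k + 1), ∀ j ∈ Finset.Icc 1 (2 * k + 1),
        i ≠ j → Disjoint (P i) (P j))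
    (hcover : ∀ a : α, ∃ i ∈ Finset.Icc 1 (2 * k + 1), a ∈ P i)
    (i : ℕ) (hi1 : 1 ≤ i) (hi2 : 2 * i < 2 * k + 1)
    (S S' : Finset α)
    (hbal : iBal g (2 * k + 1) i (sigF P S))
    (hbal' : iBal g (2 * k + 1) i (sigF P S'))
    (hagree : ∀ j ∈ Finset.Icc 1 i, sigF P S j = sigF P S' j)
    (hsum : ∑ j ∈ Finset.Icc 1 (2 * k + 1), sigF P S j
        = ∑ j ∈ Finset.Icc 1 (2 * k + 1), sigF P S' j) :
    nrank (NIndep (k + 1) (QoddF P k) (soddF n g k)) S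
      = nrank (NIndep (k + 1) (QoddF P k) (soddF n g k)) S' ∧
    nrank (NIndep (k + 1) (QevenF P k) (sevenF n g k)) S
      = nrank (NIndep (k + 1) (QevenF P k) (sevenF n g k)) S' ∧
    nrank (NIndep (k + 1) (QevenF P k) (sevenF n g k)) S
      = nrank (NIndep (k + 2) (QevenF' P k) (sevenF' n g k)) S ∧
    nrank (NIndep (k + 2) (QevenF' P k) (sevenF' n g k)) S
      = nrank (NIndep (k + 2) (QevenF' P k) (sevenF' n g k)) S' := by
  have hk : 1 ≤ k := by omega
  have hn : 4 * g ≤ n := by nlinarith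
  have hodd := (isBlockCoarsening_odd P n g k).isLeast_nrank hdisj hcover
    fun j _ => tauF_nonneg hn j
  have heven := (isBlockCoarsening_even P n g k).isLeast_nrank hdisj hcover
    fun j _ => tauEven_nonneg hn j
  have heven' := (isBlockCoarsening_even' P n g k hk).isLeast_nrank hdisj hcover
    fun j _ => tauEven'_nonneg hn j
  have hagree' : ∀ j ∈ Icc 1 i, sigF P S' j = sigF P S j := fun j hj => (hagree j hj).symm
  have heven_even' (T : Finset α) (hT : iBal g (2 * k + 1) i (sigF P T)) :
      nrank (NIndep (k + 1) (QevenF P k) (sevenF n g k)) T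
        = nrank (NIndep (k + 2) (QevenF' P k) (sevenF' n g k)) T := by
    exact_mod_cast (heven T).eq_of_forall_exists_le (heven' T)
      (forall_exists_nestedRankBound_tauEven'_le hk)
      (forall_exists_nestedRankBound_tauEven_le hk hg4 hi1 hi2 hT)
  have heven_eq : nrank (NIndep (k + 1) (QevenF P k) (sevenF n g k)) S
      = nrank (NIndep (k + 1) (QevenF P k) (sevenF n g k)) S' := by
    exact_mod_cast (heven S).eq_of_forall_exists_le (heven S')
      (forall_exists_nestedRankBound_le_even hg4 hi1 hi2 hbal hagree hsum)
      (forall_exists_nestedRankBound_le_even hg4 hi1 hi2 hbal' hagree' hsum.symm)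
  refine ⟨?_, heven_eq, heven_even' S hbal, ?_⟩
  · exact_mod_cast (hodd S).eq_of_forall_exists_le (hodd S')
      (forall_exists_nestedRankBound_le_odd hg4 hi1 hi2 hbal hagree hsum)
      (forall_exists_nestedRankBound_le_odd hg4 hi1 hi2 hbal' hagree' hsum.symm)
  · rw [← heven_even' S hbal, ← heven_even' S' hbal', heven_eq]

/-- For `1 ≤ i < r/2` (`r = 2k+1`), if `S, S' ⊆ U` have `i`-balanced
signatures agreeing on the first `i` coordinates and with equal coordinate sums, then
their ranks agree in `M_odd`, and their ranks in `M_even` and `M'_even` all coincide. -/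
theorem rank_suffix_indistinguishability
    {α : Type*} [Fintype α] [DecidableEq α]
    (n g k : ℕ) (hk : 1 ≤ k) (hn : 0 < n) (hn2 : 2 ∣ n) (hg : 0 < g) (hg4 : 4 ∣ g)
    (hgrn : 5 * g * (2 * k + 1) ≤ n)
    (P : ℕ → Finset α)
    (hdisj : ∀ i ∈ Finset.Icc 1 (2 * k + 1), ∀ j ∈ Finset.Icc 1 (2 * k + 1),
        i ≠ j → Disjoint (P i) (P j))
    (hcover : ∀ a : α, ∃ i ∈ Finset.Icc 1 (2 * k + 1), a ∈ P i)
    (hcard : ∀ i ∈ Finset.Icc 1 (2 * k + 1), (P i).card = n)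
    (i : ℕ) (hi1 : 1 ≤ i) (hi2 : 2 * i < 2 * k + 1)
    (S S' : Finset α)
    (hbal : iBal g (2 * k + 1) i (sigF P S))
    (hbal' : iBal g (2 * k + 1) i (sigF P S'))
    (hagree : ∀ j ∈ Finset.Icc 1 i, sigF P S j = sigF P S' j)
    (hsum : ∑ j ∈ Finset.Icc 1 (2 * k + 1), sigF P S j
        = ∑ j ∈ Finset.Icc 1 (2 * k + 1), sigF P S' j) :
    nrank (NIndep (k + 1) (QoddF P k) (soddF n g k)) S
      = nrank (NIndep (k + 1) (QoddF P k) (soddF n g k)) S' ∧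
    nrank (NIndep (k + 1) (QevenF P k) (sevenF n g k)) S
      = nrank (NIndep (k + 1) (QevenF P k) (sevenF n g k)) S' ∧
    nrank (NIndep (k + 1) (QevenF P k) (sevenF n g k)) S
      = nrank (NIndep (k + 2) (QevenF' P k) (sevenF' n g k)) S ∧
    nrank (NIndep (k + 2) (QevenF' P k) (sevenF' n g k)) S
      = nrank (NIndep (k + 2) (QevenF' P k) (sevenF' n g k)) S' :=
  rank_suffix_indistinguishability_general n g k hg4 hgrn P hdisj hcover i hi1 hi2 S S' hbal hbal'
    hagree hsum
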